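/- arXiv:2404.17163 — 2 statements merged into one kernel-verified Lean document; each statement's English description precedes it below -/
import Mathlib

section
/- Let r ∈ ℕ, r ≥ 1, and p ≥ 1. Define S(r,p) = rp/(rp+1) + ∑_{j=1}^{r−1} ((−1)^j/(j+1)!)·∏_{i=0}^{j−1}(rp − i). Then S(r,p) > 0 if r is odd and S(r,p) < 0 if r is even. -/
/-!
Writing `P_j(x) = x (x - 1) ⋯ (x - j + 1)`, the sum has the closed form
`x / (x + 1) + ∑_{j=1}^{r-1} (-1)^j P_j(x) / (j+1)! = (-1)^(r+1) P_r(x) / (r! (x + 1))`,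
which follows by induction on `r` from `P_{r+1}(x) = P_r(x) (x - r)`.
For `x = r p ≥ r` every factor of `P_r(x)` and of the denominator is positive,
so the sign of the sum is `(-1)^(r+1)`.
-/

open Finset

lemma div_add_one_add_sum_neg_one_pow_mul_prod_sub {K : Type*} [Field K] [CharZero K]
    (x : K) (hx : x + 1 ≠ 0) (r : ℕ) (hr : 1 ≤ r) :
    x / (x + 1) + ∑ j ∈ Icc 1 (r - 1),
        ((-1 : K) ^ j / (Nat.factorial (j + 1))) * ∏ i ∈ range j, (x - i)
      = (-1 : K) ^ (r + 1) * (∏ i ∈ range r, (x - i)) / (Nat.factorial r * (x + 1)) := by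
  induction r, hr using Nat.le_induction with
  | base => simp
  | succ n hn ih =>
    obtain ⟨m, rfl⟩ : ∃ m, n = m + 1 := ⟨n - 1, by omega⟩
    simp only [Nat.add_sub_cancel] at ih ⊢
    rw [sum_Icc_succ_top (by omega : 1 ≤ m + 1), ← add_assoc, ih,
      prod_range_succ (n := m + 1), Nat.factorial_succ (m + 1)]
    have hfac : (Nat.factorial (m + 1) : K) ≠ 0 :=
      Nat.cast_ne_zero.mpr (Nat.factorial_ne_zero _)
    have hsucc : (m + 1 + 1 : K) ≠ 0 := by exact_mod_cast (m + 1).succ_ne_zero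
    push_cast
    field_simp
    ring

lemma prod_range_sub_pos {x : ℝ} {r : ℕ} (hx : (r : ℝ) ≤ x) :
    0 < ∏ i ∈ range r, (x - i) :=
  prod_pos fun i hi => by
    have : (i : ℝ) < r := by exact_mod_cast mem_range.mp hi
    linarith

theorem stmt_8 (r : ℕ) (hr : 1 ≤ r) (p : ℝ) (hp : 1 ≤ p) :
    (Odd r → 0 < (r * p) / (r * p + 1)
        + ∑ j ∈ Finset.Icc 1 (r - 1),
            ((-1 : ℝ) ^ j / (Nat.factorial (j + 1))) * ∏ i ∈ Finset.range j, (r * p - i)) ∧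
    (Even r → (r * p) / (r * p + 1)
        + ∑ j ∈ Finset.Icc 1 (r - 1),
            ((-1 : ℝ) ^ j / (Nat.factorial (j + 1))) * ∏ i ∈ Finset.range j, (r * p - i) < 0) := by
  have hrp : (r : ℝ) ≤ r * p := le_mul_of_one_le_right (Nat.cast_nonneg r) hp
  have hden : (0 : ℝ) < r * p + 1 := by positivity
  have hquot : 0 < (∏ i ∈ range r, ((r : ℝ) * p - i)) / (Nat.factorial r * (r * p + 1)) :=
    div_pos (prod_range_sub_pos hrp) (by positivity)
  rw [div_add_one_add_sum_neg_one_pow_mul_prod_sub _ hden.ne' r hr, mul_div_assoc]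
  refine ⟨fun hodd => ?_, fun heven => ?_⟩
  · rwa [hodd.add_one.neg_one_pow, one_mul]
  · rw [heven.add_one.neg_one_pow, neg_one_mul]
    exact neg_neg_of_pos hquot
end

section
/- For a ∈ (0,1) and p > 1, define h(x) = 1 + 1_{[0,a]}(x)(a^p−x^p)/p + 1_{[a,1]}(x)((1−a)^p−(1−x)^p)/p. Then ∫_0^1 h(x) dx = 1 + (a^{p+1}+(1−a)^{p+1})/(p+1), and h(a) = 1, and the weak derivative of h is −x^{p−1} on (0,a) and (1−x)^{p−1} on (a,1), so that |h(a)|^q + ∫_0^1 |h'(x)|^q dx = 1 + (a^{p+1}+(1−a)^{p+1})/(p+1) where q = p/(p−1). -/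
open MeasureTheory Set intervalIntegral

private lemma aux_int (p c : ℝ) (hp : 0 < p) (hc : 0 < c) :
    ∫ x in (0:ℝ)..c, x ^ p = c ^ (p + 1) / (p + 1) := by
  rw [integral_rpow (Or.inl (by linarith)), Real.zero_rpow (by positivity)]
  ring

private lemma aux_int2 (p c : ℝ) (hp : 0 < p) (hc : 0 < c) :
    ∫ x in (0:ℝ)..c, (1 + (c ^ p - x ^ p) / p) = c + c ^ (p + 1) / (p + 1) := by
  have hint : IntervalIntegrable (fun x : ℝ => x ^ p) volume 0 c :=
    intervalIntegrable_rpow' (by linarith)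
  have heq : (fun x : ℝ => 1 + (c ^ p - x ^ p) / p)
      = fun x : ℝ => (1 + c ^ p / p) - (1 / p) * x ^ p := by
    funext x; ring
  rw [heq, intervalIntegral.integral_sub intervalIntegrable_const (hint.const_mul _),
    intervalIntegral.integral_const, intervalIntegral.integral_const_mul, aux_int p c hp hc]
  have h1 : c ^ (p + 1) = c ^ p * c := Real.rpow_add_one hc.ne' p
  have hp' : p ≠ 0 := hp.ne'
  have hp1 : p + 1 ≠ 0 := by linarith
  rw [h1]
  field_simp
  ring_nf
  field_simp
  ring

theorem stmt_17 (p q a : ℝ) (hp : 1 < p) (hq : q = p / (p - 1)) (ha : a ∈ Set.Ioo (0:ℝ) 1) :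
    let h := fun x : ℝ => 1 + Set.indicator (Set.Icc 0 a) (fun x => (a ^ p - x ^ p) / p) x
        + Set.indicator (Set.Icc a 1) (fun x => ((1 - a) ^ p - (1 - x) ^ p) / p) x
    let h' := fun x : ℝ => if x < a then -x ^ (p - 1) else (1 - x) ^ (p - 1)
    (∫ x in (0:ℝ)..1, h x) = 1 + (a ^ (p + 1) + (1 - a) ^ (p + 1)) / (p + 1) ∧
    h a = 1 ∧
    (∀ x ∈ Set.Ioo (0:ℝ) a, HasDerivAt h (h' x) x) ∧
    (∀ x ∈ Set.Ioo a (1:ℝ), HasDerivAt h (h' x) x) ∧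
    |h a| ^ q + (∫ x in (0:ℝ)..1, |h' x| ^ q)
      = 1 + (a ^ (p + 1) + (1 - a) ^ (p + 1)) / (p + 1) := by
  intro h h'
  obtain ⟨ha0, ha1⟩ := ha
  have hp0 : (0:ℝ) < p := by linarith
  have hb0 : (0:ℝ) < 1 - a := by linarith
  have hpq : (p - 1) * q = p := by
    have h1 : p - 1 ≠ 0 := by linarith
    rw [hq, mul_div_assoc', mul_comm, mul_div_assoc, div_self h1, mul_one]
  -- pointwise descriptions of h
  have hleft : ∀ x ∈ Icc (0:ℝ) a, h x = 1 + (a ^ p - x ^ p) / p := by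
    intro x hx
    have h2 : Set.indicator (Set.Icc a 1) (fun x => ((1 - a) ^ p - (1 - x) ^ p) / p) x = 0 := by
      rcases eq_or_lt_of_le hx.2 with rfl | hxa
      · rw [indicator_of_mem (left_mem_Icc.mpr ha1.le)]; simp
      · rw [indicator_of_notMem (by simp only [Set.mem_Icc, not_and_or]; left; linarith)]
    simp only [h, indicator_of_mem hx, h2, add_zero]
  have hright : ∀ x ∈ Icc a (1:ℝ), h x = 1 + ((1 - a) ^ p - (1 - x) ^ p) / p := by
    intro x hx
    have h1 : Set.indicator (Set.Icc 0 a) (fun x => (a ^ p - x ^ p) / p) x = 0 := by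
      rcases eq_or_lt_of_le hx.1 with rfl | hax
      · rw [indicator_of_mem (right_mem_Icc.mpr ha0.le)]; simp
      · rw [indicator_of_notMem (by simp only [Set.mem_Icc, not_and_or]; right; linarith)]
    simp only [h, indicator_of_mem hx, h1, add_zero, zero_add]
  have hh2 : h a = 1 := by
    rw [hleft a (right_mem_Icc.mpr ha0.le)]; simp
  -- part 1
  have part1 : (∫ x in (0:ℝ)..1, h x) = 1 + (a ^ (p + 1) + (1 - a) ^ (p + 1)) / (p + 1) := by
    have hIL : (∫ x in (0:ℝ)..a, h x) = a + a ^ (p + 1) / (p + 1) := by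
      rw [intervalIntegral.integral_congr (g := fun x => 1 + (a ^ p - x ^ p) / p)
        (by rw [uIcc_of_le ha0.le]; exact hleft)]
      exact aux_int2 p a hp0 ha0
    have hIR : (∫ x in a..(1:ℝ), h x) = (1 - a) + (1 - a) ^ (p + 1) / (p + 1) := by
      rw [intervalIntegral.integral_congr (g := fun x => 1 + ((1 - a) ^ p - (1 - x) ^ p) / p)
        (by rw [uIcc_of_le ha1.le]; exact hright)]
      have := intervalIntegral.integral_comp_sub_left (a := a) (b := 1)
        (fun y : ℝ => 1 + ((1 - a) ^ p - y ^ p) / p) 1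
      simp only [sub_self] at this
      rw [this, aux_int2 p (1 - a) hp0 hb0]
    have hcontL : Continuous fun x : ℝ => 1 + (a ^ p - x ^ p) / p := by
      have := Real.continuous_rpow_const hp0.le
      fun_prop
    have hcontR : Continuous fun x : ℝ => 1 + ((1 - a) ^ p - (1 - x) ^ p) / p := by
      have h1 : Continuous fun x : ℝ => (1 - x) ^ p :=
        (Real.continuous_rpow_const hp0.le).comp (continuous_const.sub continuous_id)
      fun_prop
    have hintL : IntervalIntegrable h volume 0 a := by
      apply (hcontL.intervalIntegrable 0 a).congr_ae
      rw [Set.uIoc_of_le ha0.le]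
      filter_upwards [ae_restrict_mem measurableSet_Ioc] with x hx
      exact (hleft x ⟨hx.1.le, hx.2⟩).symm
    have hintR : IntervalIntegrable h volume a 1 := by
      apply (hcontR.intervalIntegrable a 1).congr_ae
      rw [Set.uIoc_of_le ha1.le]
      filter_upwards [ae_restrict_mem measurableSet_Ioc] with x hx
      exact (hright x ⟨hx.1.le, hx.2⟩).symm
    rw [← intervalIntegral.integral_add_adjacent_intervals hintL hintR, hIL, hIR]
    ring
  -- derivatives
  have part3 : ∀ x ∈ Set.Ioo (0:ℝ) a, HasDerivAt h (h' x) x := by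
    intro x hx
    have hev : h =ᶠ[nhds x] fun y => 1 + (a ^ p - y ^ p) / p := by
      filter_upwards [Ioo_mem_nhds hx.1 hx.2] with y hy
      exact hleft y ⟨hy.1.le, hy.2.le⟩
    have hd : HasDerivAt (fun y : ℝ => 1 + (a ^ p - y ^ p) / p) (h' x) x := by
      have h1 := Real.hasDerivAt_rpow_const (x := x) (p := p) (Or.inl hx.1.ne')
      have h2 := (hasDerivAt_const x (1:ℝ)).add (((hasDerivAt_const x (a ^ p)).sub h1).div_const p)
      refine h2.congr_deriv ?_; symm
      rw [show h' x = -x ^ (p - 1) from if_pos hx.2]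
      field_simp
      ring
    exact hd.congr_of_eventuallyEq hev
  have part4 : ∀ x ∈ Set.Ioo a (1:ℝ), HasDerivAt h (h' x) x := by
    intro x hx
    have hev : h =ᶠ[nhds x] fun y => 1 + ((1 - a) ^ p - (1 - y) ^ p) / p := by
      filter_upwards [Ioo_mem_nhds hx.1 hx.2] with y hy
      exact hright y ⟨hy.1.le, hy.2.le⟩
    have hd : HasDerivAt (fun y : ℝ => 1 + ((1 - a) ^ p - (1 - y) ^ p) / p) (h' x) x := by
      have hx1 : (0:ℝ) < 1 - x := by linarith [hx.2]
      have hi : HasDerivAt (fun y : ℝ => 1 - y) (-1) x := by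
        simpa using (hasDerivAt_id x).const_sub 1
      have h1 := (Real.hasDerivAt_rpow_const (x := 1 - x) (p := p) (Or.inl hx1.ne')).comp x hi
      have h2 := (hasDerivAt_const x (1:ℝ)).add
        (((hasDerivAt_const x ((1 - a) ^ p)).sub h1).div_const p)
      refine h2.congr_deriv ?_; symm
      rw [show h' x = (1 - x) ^ (p - 1) from if_neg (not_lt.mpr hx.1.le)]
      field_simp
      ring
    exact hd.congr_of_eventuallyEq hev
  -- part 5
  have part5 : |h a| ^ q + (∫ x in (0:ℝ)..1, |h' x| ^ q)
      = 1 + (a ^ (p + 1) + (1 - a) ^ (p + 1)) / (p + 1) := by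
    have habs : |h a| ^ q = 1 := by rw [hh2, abs_one, Real.one_rpow]
    have haeL : (fun x => |h' x| ^ q) =ᵐ[volume.restrict (Ioc (0:ℝ) a)] fun x => x ^ p := by
      rw [← MeasureTheory.restrict_Ioo_eq_restrict_Ioc]
      filter_upwards [ae_restrict_mem measurableSet_Ioo] with x hx
      rw [show h' x = -x ^ (p - 1) from if_pos hx.2, abs_neg,
        abs_of_nonneg (Real.rpow_nonneg hx.1.le _), ← Real.rpow_mul hx.1.le, hpq]
    have haeR : (fun x => |h' x| ^ q) =ᵐ[volume.restrict (Ioc a (1:ℝ))] fun x => (1 - x) ^ p := by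
      filter_upwards [ae_restrict_mem measurableSet_Ioc] with x hx
      have hx1 : (0:ℝ) ≤ 1 - x := by linarith [hx.2]
      rw [show h' x = (1 - x) ^ (p - 1) from if_neg (not_lt.mpr hx.1.le),
        abs_of_nonneg (Real.rpow_nonneg hx1 _), ← Real.rpow_mul hx1, hpq]
    have hcont1 : Continuous fun x : ℝ => x ^ p := Real.continuous_rpow_const hp0.le
    have hcont2 : Continuous fun x : ℝ => (1 - x) ^ p :=
      hcont1.comp (continuous_const.sub continuous_id)
    have hintL' : IntervalIntegrable (fun x => |h' x| ^ q) volume 0 a := by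
      apply (hcont1.intervalIntegrable 0 a).congr_ae
      rw [Set.uIoc_of_le ha0.le]
      exact haeL.symm
    have hintR' : IntervalIntegrable (fun x => |h' x| ^ q) volume a 1 := by
      apply (hcont2.intervalIntegrable a 1).congr_ae
      rw [Set.uIoc_of_le ha1.le]
      exact haeR.symm
    have hL : (∫ x in (0:ℝ)..a, |h' x| ^ q) = a ^ (p + 1) / (p + 1) := by
      rw [intervalIntegral.integral_of_le ha0.le, MeasureTheory.integral_congr_ae haeL,
        ← intervalIntegral.integral_of_le ha0.le, aux_int p a hp0 ha0]
    have hR : (∫ x in a..(1:ℝ), |h' x| ^ q) = (1 - a) ^ (p + 1) / (p + 1) := by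
      rw [intervalIntegral.integral_of_le ha1.le, MeasureTheory.integral_congr_ae haeR,
        ← intervalIntegral.integral_of_le ha1.le]
      have := intervalIntegral.integral_comp_sub_left (a := a) (b := 1) (fun y : ℝ => y ^ p) 1
      simp only [sub_self] at this
      rw [this, aux_int p (1 - a) hp0 hb0]
    rw [habs, ← intervalIntegral.integral_add_adjacent_intervals hintL' hintR', hL, hR]
    ring
  exact ⟨part1, hh2, part3, part4, part5⟩
end
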